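/- Let X be a partial groupoid, f ∈ X_1, and x ∈ X_2 a 2-simplex with x_{01} = f·τ (the inverse of f) and x_{12} = f. Then x = f·χ, where χ : [2] → [1] is the surjection sending i to |1 − i|; in particular x is degenerate. -/

import Mathlib

/-- A symmetric (simplicial) set: a functor `Υᵒᵖ → Set`, where `Υ` has objects
`[n] = {0,…,n}` (encoded as `Fin (n+1)`) and all functions as morphisms.
For `α : [m] → [n]` and `x ∈ X_n`, `act α x` is `x · α ∈ X_m`. -/
structure SymSet where
  obj : ℕ → Type
  act : ∀ {m n : ℕ}, (Fin (m + 1) → Fin (n + 1)) → obj n → obj m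
  act_id : ∀ {n : ℕ} (x : obj n), act id x = x
  act_comp : ∀ {m n k : ℕ} (α : Fin (m + 1) → Fin (n + 1)) (β : Fin (n + 1) → Fin (k + 1))
      (x : obj k), act α (act β x) = act (β ∘ α) x

namespace SymSet

/-- `x_{ij} ∈ X_1`, the action on `x ∈ X_n` of the map `[1] → [n]` with `0 ↦ i`, `1 ↦ j`. -/
def edge (X : SymSet) {n : ℕ} (i j : Fin (n + 1)) (x : X.obj n) : X.obj 1 :=
  X.act (fun t : Fin 2 => if t = 0 then i else j) x

/-- The domain of an edge, its image under `ι₀ : [0] → [1]`, `0 ↦ 0`. -/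
def edgeDom (X : SymSet) (f : X.obj 1) : X.obj 0 :=
  X.act (fun _ : Fin 1 => (0 : Fin 2)) f

/-- The codomain of an edge, its image under `ι₁ : [0] → [1]`, `0 ↦ 1`. -/
def edgeCod (X : SymSet) (f : X.obj 1) : X.obj 0 :=
  X.act (fun _ : Fin 1 => (1 : Fin 2)) f

/-- The identity edge `id_a` on an object `a ∈ X_0`, induced by the unique map `[1] → [0]`. -/
def identityEdge (X : SymSet) (a : X.obj 0) : X.obj 1 :=
  X.act (fun _ : Fin 2 => (0 : Fin 1)) a

/-- An edge is an identity if it is in the image of `X_0 → X_1`. -/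
def IsIdentityEdge (X : SymSet) (f : X.obj 1) : Prop :=
  ∃ a : X.obj 0, f = X.identityEdge a

/-- The tuple of edges `x_{ij}` (for `i < j` an edge `{i,j}` of the spine `T`)
associated to an `n`-simplex `x`. -/
def spineTuple (X : SymSet) {n : ℕ} (T : SimpleGraph (Fin (n + 1))) (x : X.obj n) :
    ∀ i j : Fin (n + 1), i < j → T.Adj i j → X.obj 1 :=
  fun i j _ _ => X.edge i j x

/-- Membership in `lim_T X`: the components have matching endpoints. -/
def IsSpineLim (X : SymSet) {n : ℕ} (T : SimpleGraph (Fin (n + 1)))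
    (e : ∀ i j : Fin (n + 1), i < j → T.Adj i j → X.obj 1) : Prop :=
  ∃ v : Fin (n + 1) → X.obj 0, ∀ (i j : Fin (n + 1)) (hlt : i < j) (h : T.Adj i j),
    X.edgeDom (e i j hlt h) = v i ∧ X.edgeCod (e i j hlt h) = v j

/-- The limit `lim_T X` of the diagram associated to a spine `T`. -/
def SpineLim (X : SymSet) {n : ℕ} (T : SimpleGraph (Fin (n + 1))) : Type :=
  { e : ∀ i j : Fin (n + 1), i < j → T.Adj i j → X.obj 1 // X.IsSpineLim T e }

lemma spineTuple_isSpineLim (X : SymSet) {n : ℕ} (T : SimpleGraph (Fin (n + 1)))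
    (x : X.obj n) : X.IsSpineLim T (X.spineTuple T x) := by
  refine ⟨fun i => X.act (fun _ : Fin 1 => i) x, fun i j hlt h => ⟨?_, ?_⟩⟩
  · show X.act _ (X.act _ x) = _
    rw [X.act_comp]
    show X.act ((fun t : Fin 2 => if t = 0 then i else j) ∘ fun _ : Fin 1 => 0) x
      = X.act (fun _ : Fin 1 => i) x
    congr 1
  · show X.act _ (X.act _ x) = _
    rw [X.act_comp]
    show X.act ((fun t : Fin 2 => if t = 0 then i else j) ∘ fun _ : Fin 1 => 1) x
      = X.act (fun _ : Fin 1 => j) x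
    congr 1

/-- The map `𝓔_T : X_n → lim_T X`. -/
def spineMap (X : SymSet) {n : ℕ} (T : SimpleGraph (Fin (n + 1))) (x : X.obj n) :
    X.SpineLim T :=
  ⟨X.spineTuple T x, X.spineTuple_isSpineLim T x⟩

/-- A symmetric set is *spiny* if `𝓔_T` is injective for every `n ≥ 1` and
every spine `T` of `[n]` (a tree with vertex set `[n]`). -/
def Spiny (X : SymSet) : Prop :=
  ∀ n : ℕ, 1 ≤ n → ∀ T : SimpleGraph (Fin (n + 1)), T.IsTree →
    Function.Injective (X.spineMap T)

/-- An element `x ∈ X_n` is degenerate if `x = y · σ` for some noninvertible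
surjection `σ : [n] → [k]`. -/
def Degenerate (X : SymSet) {n : ℕ} (x : X.obj n) : Prop :=
  ∃ (k : ℕ) (σ : Fin (n + 1) → Fin (k + 1)) (y : X.obj k),
    Function.Surjective σ ∧ ¬ Function.Bijective σ ∧ x = X.act σ y

/-- A symmetric subset (subfunctor) of `X`. -/
structure SymSubset (X : SymSet) where
  carrier : ∀ n : ℕ, Set (X.obj n)
  act_mem : ∀ {m n : ℕ} (α : Fin (m + 1) → Fin (n + 1)) {x : X.obj n},
    x ∈ carrier n → X.act α x ∈ carrier m

/-- `X` is `n`-skeletal: the smallest symmetric subset of `X` containing all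
of its `n`-simplices is all of `X`. -/
def IsSkeletal (X : SymSet) (n : ℕ) : Prop :=
  ∀ Y : SymSubset X, (∀ x : X.obj n, x ∈ Y.carrier n) →
    ∀ (m : ℕ) (x : X.obj m), x ∈ Y.carrier m

/-- `X` has dimension `n`: it is `n`-skeletal but not `k`-skeletal for `k < n`
(for `n ≥ 1` this is equivalent to not being `(n-1)`-skeletal). -/
def HasDim (X : SymSet) (n : ℕ) : Prop :=
  X.IsSkeletal n ∧ ∀ k : ℕ, k < n → ¬ X.IsSkeletal k

/-- Two objects are related if there is an edge between them (in either direction). -/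
def EdgeRel (X : SymSet) (a b : X.obj 0) : Prop :=
  ∃ f : X.obj 1, (X.edgeDom f = a ∧ X.edgeCod f = b) ∨ (X.edgeDom f = b ∧ X.edgeCod f = a)

/-- `X` is connected: it is nonempty and any two objects are joined by a
zig-zag of edges. -/
def Connected (X : SymSet) : Prop :=
  Nonempty (X.obj 0) ∧ ∀ a b : X.obj 0, Relation.ReflTransGen X.EdgeRel a b

/-- `n_a`: the number of nonidentity edges with domain `a`. -/
noncomputable def nEdges (X : SymSet) (a : X.obj 0) : ℕ :=
  Nat.card { f : X.obj 1 // X.edgeDom f = a ∧ ¬ X.IsIdentityEdge f }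

/-- `p(X)`: the maximum of the `n_a` over all objects `a`. -/
noncomputable def pVal (X : SymSet) : ℕ := ⨆ a : X.obj 0, X.nEdges a

/-- A map of symmetric sets (a natural transformation). -/
structure SymMap (X Y : SymSet) where
  app : ∀ n : ℕ, X.obj n → Y.obj n
  naturality : ∀ {m n : ℕ} (α : Fin (m + 1) → Fin (n + 1)) (x : X.obj n),
    app m (X.act α x) = Y.act α (app n x)

/-- A map of symmetric sets is an isomorphism iff it is levelwise bijective. -/
def SymMap.IsIso {X Y : SymSet} (F : SymMap X Y) : Prop :=
  ∀ n : ℕ, Function.Bijective (F.app n)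

/-- `X` and `Y` are isomorphic symmetric sets. -/
def Isomorphic (X Y : SymSet) : Prop := ∃ F : SymMap X Y, F.IsIso

/-- The Bousfield–Segal map `𝓑_m : X_m → X_1^m`, `x ↦ (x_{01}, x_{02}, …, x_{0m})`. -/
def bousfield (X : SymSet) {m : ℕ} (x : X.obj m) : Fin m → X.obj 1 :=
  fun i => X.edge 0 i.succ x

/-- `X` is spiny in degrees below `q`: `𝓔_T` is injective for every spine `T`
of `[n]` for each `1 ≤ n ≤ q`. -/
def SpinyBelow (X : SymSet) (q : ℕ) : Prop :=
  ∀ n : ℕ, 1 ≤ n → n ≤ q → ∀ T : SimpleGraph (Fin (n + 1)), T.IsTree →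
    Function.Injective (X.spineMap T)

/-- `X` is a groupoid: `𝓔_T : X_n → lim_T X` is a bijection for every `n ≥ 1`
and every spine `T` of `[n]`. -/
def IsGroupoid (X : SymSet) : Prop :=
  ∀ n : ℕ, 1 ≤ n → ∀ T : SimpleGraph (Fin (n + 1)), T.IsTree →
    Function.Bijective (X.spineMap T)

/-- `X` is reduced: `X_0` is a singleton. -/
def Reduced (X : SymSet) : Prop := Nonempty (X.obj 0) ∧ Subsingleton (X.obj 0)

/-- A partial group is a reduced spiny symmetric set. -/
def IsPartialGroup (X : SymSet) : Prop := X.Reduced ∧ X.Spiny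

/-- The levelwise product of two symmetric sets. -/
def prod (X Y : SymSet) : SymSet where
  obj n := X.obj n × Y.obj n
  act α p := (X.act α p.1, Y.act α p.2)
  act_id p := by cases p with | mk a b => simp only [X.act_id, Y.act_id]
  act_comp α β p := by cases p with | mk a b => simp only [X.act_comp, Y.act_comp]

end SymSet

/-! Spininess along the path spine `0 — 1 — 2` says a 2-simplex is determined by its edges `01`
and `12`. Those of `f·χ` are `f_{χ0 χ1} = f_{10} = f·τ` and `f_{χ1 χ2} = f_{01} = f`, exactly
the edges prescribed for `x`; and `χ` is surjective but identifies `0` and `2`. -/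

namespace SymSet

lemma edge_act (X : SymSet) {m n : ℕ} (α : Fin (m + 1) → Fin (n + 1)) (i j : Fin (m + 1))
    (x : X.obj n) : X.edge i j (X.act α x) = X.edge (α i) (α j) x := by
  unfold edge
  rw [X.act_comp]
  congr 1
  funext t
  exact apply_ite α _ _ _

lemma edge_zero_one (X : SymSet) (f : X.obj 1) : X.edge 0 1 f = f := by
  conv_rhs => rw [← X.act_id f]
  unfold edge
  congr 1
  funext t
  fin_cases t <;> rfl

end SymSet

open SimpleGraph in
lemma SimpleGraph.pathGraph_isTree (n : ℕ) : (pathGraph (n + 1)).IsTree := by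
  rw [isTree_iff_connected_and_card]
  refine ⟨pathGraph_connected n, ?_⟩
  let e : Fin n → (pathGraph (n + 1)).edgeSet := fun i =>
    ⟨s(i.castSucc, i.succ), by simp [pathGraph_adj]⟩
  have he : Function.Bijective e := by
    refine ⟨fun i j hij => ?_, fun ⟨p, hp⟩ => ?_⟩
    · have hval := congrArg Subtype.val hij
      simp only [e, Sym2.eq_iff, Fin.ext_iff, Fin.val_castSucc, Fin.val_succ] at hval
      exact Fin.ext (by omega)
    · induction p using Sym2.ind with
      | h u v =>
        rw [mem_edgeSet, pathGraph_adj] at hp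
        rcases hp with h | h
        · exact ⟨⟨u, by omega⟩, Subtype.ext (Sym2.eq_iff.2 (.inl ⟨rfl, Fin.ext (by simp [h])⟩))⟩
        · exact ⟨⟨v, by omega⟩, Subtype.ext (Sym2.eq_iff.2 (.inr ⟨rfl, Fin.ext (by simp [h])⟩))⟩
  simp [← Nat.card_eq_of_bijective e he]

lemma SymSet.Spiny.eq_of_edge_succ_eq {X : SymSet} (hX : X.Spiny) {n : ℕ} (hn : 1 ≤ n)
    {x y : X.obj n}
    (h : ∀ i : Fin n, X.edge i.castSucc i.succ x = X.edge i.castSucc i.succ y) : x = y := by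
  refine hX n hn _ (SimpleGraph.pathGraph_isTree n) (Subtype.ext ?_)
  funext i j hij hadj
  rw [SimpleGraph.pathGraph_adj] at hadj
  obtain ⟨k, rfl, rfl⟩ : ∃ k : Fin n, k.castSucc = i ∧ k.succ = j :=
    ⟨⟨i, by omega⟩, rfl, Fin.ext (by simp only [Fin.val_succ]; omega)⟩
  exact h k

/-- if `x ∈ X_2` has `x_{01} = f⁻¹ = f·τ` and `x_{12} = f`, then
`x = f·χ` where `χ : [2] → [1]` sends `i` to `|1 - i|`; in particular `x` is degenerate. -/
theorem stmt3 (X : SymSet) (hX : X.Spiny) (f : X.obj 1) (x : X.obj 2)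
    (h01 : X.edge 0 1 x = X.act (fun t : Fin 2 => if t = 0 then 1 else 0) f)
    (h12 : X.edge 1 2 x = f) :
    x = X.act (fun i : Fin 3 => if i = 1 then 0 else 1) f ∧ X.Degenerate x := by
  set χ : Fin 3 → Fin 2 := fun i => if i = 1 then 0 else 1
  have hx : x = X.act χ f := by
    refine hX.eq_of_edge_succ_eq (by norm_num) fun i => ?_
    rw [X.edge_act]
    fin_cases i
    · exact h01
    · exact h12.trans (X.edge_zero_one f).symm
  refine ⟨hx, 1, χ, f, by decide, fun hχ => ?_, hx⟩
  exact absurd (hχ.injective (a₁ := 0) (a₂ := 2) rfl) (by decide)
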